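/- arXiv:1802.09082 — 2 statements merged into one kernel-verified Lean document; each statement's English description precedes it below -/
import Mathlib

section
/- Let Y ⊆ ℝⁿ, let [x] be a box of width less than ε contained in D, and suppose every inclusion-function image satisfies wid([f_u]([x])) ≤ ρ·wid([x]) with f_u([x]) ⊆ [f_u]([x]). If there exists u ∈ 𝒰 and a point z ∈ [x] with f_u(z) ∈ Y ⊖ B_{ρε} (Pontryagin difference with the closed ρε-ball in infinity norm), then [f_u]([x]) ⊆ Y. -/
/-- Key step of the interval predecessor computation: if the box `[x] = [a,b]` has
width less than `ε`, the inclusion function image `F u` of `[x]` contains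
`f_u([x])` and has width at most `ρ·wid([x])`, and some point `z ∈ [x]` satisfies
`f_u(z) ∈ Y ⊖ B_{ρε}`, then `F u = [f_u]([x]) ⊆ Y`. -/
theorem stmt_5 {n : ℕ} (U : Type*) [Nonempty U]
    (f : U → (Fin n → ℝ) → (Fin n → ℝ)) (F : U → Set (Fin n → ℝ))
    (Y : Set (Fin n → ℝ)) (ρ ε : ℝ) (hρ : 0 < ρ) (hε : 0 < ε)
    (a b : Fin n → ℝ) (hab : a ≤ b) (hwid : ‖b - a‖ < ε)
    (hincl : ∀ u : U, ∀ x ∈ Set.Icc a b, f u x ∈ F u)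
    (hw : ∀ u : U, ∀ p ∈ F u, ∀ q ∈ F u, ‖p - q‖ ≤ ρ * ‖b - a‖)
    (u : U) (z : Fin n → ℝ) (hz : z ∈ Set.Icc a b)
    (hzY : f u z ∈ {c : Fin n → ℝ | ∀ d : Fin n → ℝ, ‖d‖ ≤ ρ * ε → c + d ∈ Y}) :
    F u ⊆ Y := by
  intro p hp
  have hfz : f u z ∈ F u := hincl u z hz
  have h1 : ‖p - f u z‖ ≤ ρ * ‖b - a‖ := hw u p hp _ hfz
  have h2 : ‖p - f u z‖ ≤ ρ * ε := h1.trans (by nlinarith)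
  have := hzY (p - f u z) h2
  simpa using this
end

section
/- Suppose |f_u(x) - f_v(x)| ≤ ρ|u - v| for all x ∈ D ⊆ ℝⁿ and u, v ∈ 𝒰 ⊆ ℝᵐ (infinity norms), and let [𝒰]_η = η ℤᵐ ∩ 𝒰 be such that every u ∈ 𝒰 is within infinity-distance η/2 of some v ∈ [𝒰]_η. Then for any sets X, Y ⊆ 𝒳 ∩ D: X ∩ Pre(Y ⊖ B_{ρη/2}) ⊆ X ∩ Pre_η(Y) ⊆ X ∩ Pre(Y), where Pre_η uses only controls in [𝒰]_η. -/
/-- Predecessor with an `η`-undersampled control set: if `|f_u(x) - f_v(x)| ≤ ρ|u-v|`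
on `D` and every `u ∈ 𝒰` has a sample `v ∈ [𝒰]_η` with `|u - v| ≤ η/2`, then
`X ∩ Pre(Y ⊖ B_{ρη/2}) ⊆ X ∩ Pre_η(Y) ⊆ X ∩ Pre(Y)`. -/
theorem stmt_6 {n m : ℕ} (𝒳 D : Set (Fin n → ℝ)) (𝒰 Uη : Set (Fin m → ℝ))
    (hUη : Uη ⊆ 𝒰) (f : (Fin m → ℝ) → (Fin n → ℝ) → (Fin n → ℝ))
    (ρ η : ℝ) (hρ : 0 < ρ) (hη : 0 < η)
    (hLip : ∀ x ∈ D, ∀ u ∈ 𝒰, ∀ v ∈ 𝒰, ‖f u x - f v x‖ ≤ ρ * ‖u - v‖)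
    (hnet : ∀ u ∈ 𝒰, ∃ v ∈ Uη, ‖u - v‖ ≤ η / 2)
    (X Y : Set (Fin n → ℝ)) (hX : X ⊆ 𝒳 ∩ D) (hY : Y ⊆ 𝒳 ∩ D) :
    (X ∩ {x ∈ 𝒳 | ∃ u ∈ 𝒰, f u x ∈
        {c : Fin n → ℝ | ∀ d : Fin n → ℝ, ‖d‖ ≤ ρ * η / 2 → c + d ∈ Y}}
      ⊆ X ∩ {x ∈ 𝒳 | ∃ u ∈ Uη, f u x ∈ Y}) ∧
    (X ∩ {x ∈ 𝒳 | ∃ u ∈ Uη, f u x ∈ Y} ⊆ X ∩ {x ∈ 𝒳 | ∃ u ∈ 𝒰, f u x ∈ Y}) := by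
  constructor
  · rintro x ⟨hxX, hx𝒳, u, hu, hfu⟩
    refine ⟨hxX, hx𝒳, ?_⟩
    obtain ⟨v, hvU, hd⟩ := hnet u hu
    refine ⟨v, hvU, ?_⟩
    have hxD : x ∈ D := (hX hxX).2
    have h1 : ‖f v x - f u x‖ ≤ ρ * η / 2 := by
      calc ‖f v x - f u x‖ ≤ ρ * ‖v - u‖ := hLip x hxD v (hUη hvU) u hu
        _ ≤ ρ * (η / 2) := by
            have : ‖v - u‖ ≤ η / 2 := by rwa [norm_sub_rev]
            exact mul_le_mul_of_nonneg_left this hρ.le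
        _ = ρ * η / 2 := by ring
    have := hfu (f v x - f u x) h1
    simpa using this
  · rintro x ⟨hxX, hx𝒳, u, hu, hfu⟩
    exact ⟨hxX, hx𝒳, u, hUη hu, hfu⟩
end
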